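/- arXiv:1506.06430 — 5 statements merged into one kernel-verified Lean document; each statement's English description precedes it below -/
import Mathlib

section
/- The function f_δ is the Fenchel–Legendre conjugate of the indicator function of the convex set B_δ = {(a,b,c) ∈ ℝ × ℝ^d × ℝ : a + (|b|² + c²/δ²)/2 ≤ 0}. That is, for all (x,y,z) ∈ ℝ × ℝ^d × ℝ, sup over (a,b,c) ∈ B_δ of (ax + ⟨b,y⟩ + cz) equals f_δ(x,y,z). -/
open ENNReal Classical

/-- The function `f_δ` from the paper, defined on `ℝ × ℝ^d × ℝ` with values in `[0,+∞]`. -/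
noncomputable def fdelta (δ : ℝ) (d : ℕ) (p : ℝ × EuclideanSpace ℝ (Fin d) × ℝ) : ℝ≥0∞ :=
  if 0 < p.1 then ENNReal.ofReal ((‖p.2.1‖ ^ 2 + δ ^ 2 * p.2.2 ^ 2) / (2 * p.1))
  else if p = 0 then 0 else ⊤

/-- The convex set `B_δ = {(a,b,c) : a + (|b|² + c²/δ²)/2 ≤ 0}`. -/
def Bdelta (δ : ℝ) (d : ℕ) : Set (ℝ × EuclideanSpace ℝ (Fin d) × ℝ) :=
  {q | q.1 + (1 / 2) * (‖q.2.1‖ ^ 2 + q.2.2 ^ 2 / δ ^ 2) ≤ 0}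

/-! For `x > 0` the supremum is attained on the paraboloid bounding `B_δ`, at `b = y / x`,
`c = δ² z / x`, and the matching upper bound is Young's inequality `c z ≤ t c² / 2 + z² / (2t)`
applied to both `⟨b, y⟩` and `c z`. For `x ≤ 0` and `(x, y, z) ≠ 0`, the points
`(-t - t² s / 2, t y, t δ² z)` of `B_δ`, with `s = |y|² + δ² z²`, have pairing at least
`t (s - x)`, which is unbounded as `t → ∞`. -/

lemma mul_le_young_weighted {t : ℝ} (ht : 0 < t) (c z : ℝ) :
    c * z ≤ t / 2 * c ^ 2 + z ^ 2 / (2 * t) := by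
  have hsq : 0 ≤ (t * c - z) ^ 2 / (2 * t) := by positivity
  calc c * z = t / 2 * c ^ 2 + z ^ 2 / (2 * t) - (t * c - z) ^ 2 / (2 * t) := by
        field_simp; ring
    _ ≤ t / 2 * c ^ 2 + z ^ 2 / (2 * t) := by linarith

lemma real_inner_le_young_weighted {E : Type*} [NormedAddCommGroup E] [InnerProductSpace ℝ E]
    {t : ℝ} (ht : 0 < t) (b y : E) :
    inner ℝ b y ≤ t / 2 * ‖b‖ ^ 2 + ‖y‖ ^ 2 / (2 * t) :=
  (real_inner_le_norm b y).trans (mul_le_young_weighted ht _ _)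

lemma ENNReal.iSup₂_ofReal_of_isGreatest {ι : Type*} {s : Set ι} {f : ι → ℝ} {m : ℝ}
    (h : IsGreatest (f '' s) m) : ⨆ q ∈ s, ENNReal.ofReal (f q) = ENNReal.ofReal m := by
  obtain ⟨⟨q, hq, rfl⟩, hmax⟩ := h
  refine le_antisymm (iSup₂_le fun p hp ↦ ?_) (le_iSup₂_of_le q hq le_rfl)
  exact ENNReal.ofReal_le_ofReal (hmax ⟨p, hp, rfl⟩)

lemma ENNReal.iSup₂_ofReal_eq_top_of_not_bddAbove {ι : Type*} {s : Set ι} {f : ι → ℝ}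
    (h : ¬BddAbove (f '' s)) : ⨆ q ∈ s, ENNReal.ofReal (f q) = ⊤ := by
  refine ENNReal.eq_top_of_forall_nnreal_le fun r ↦ ?_
  obtain ⟨_, ⟨q, hq, rfl⟩, hrq⟩ := not_bddAbove_iff.mp h r
  calc (r : ℝ≥0∞) = ENNReal.ofReal r := ENNReal.ofReal_coe_nnreal.symm
    _ ≤ ENNReal.ofReal (f q) := ENNReal.ofReal_le_ofReal hrq.le
    _ ≤ ⨆ q ∈ s, ENNReal.ofReal (f q) := le_iSup₂_of_le q hq le_rfl

section

variable {δ : ℝ} {d : ℕ} {x z : ℝ} {y : EuclideanSpace ℝ (Fin d)}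

lemma fdelta_of_pos (hx : 0 < x) :
    fdelta δ d (x, y, z) = ENNReal.ofReal ((‖y‖ ^ 2 + δ ^ 2 * z ^ 2) / (2 * x)) := by
  simp [fdelta, hx]

lemma fdelta_of_nonpos_of_ne_zero (hx : x ≤ 0) (hp : (x, y, z) ≠ 0) :
    fdelta δ d (x, y, z) = ⊤ := by
  simp [fdelta, hx.not_gt, hp]

lemma mk_mem_Bdelta {a c : ℝ} {b : EuclideanSpace ℝ (Fin d)}
    (h : a + 1 / 2 * (‖b‖ ^ 2 + c ^ 2 / δ ^ 2) ≤ 0) : (a, b, c) ∈ Bdelta δ d := h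

lemma pairing_le_of_mem_Bdelta (hδ : δ ≠ 0) (hx : 0 < x) {q : ℝ × EuclideanSpace ℝ (Fin d) × ℝ}
    (hq : q ∈ Bdelta δ d) :
    q.1 * x + inner ℝ q.2.1 y + q.2.2 * z ≤ (‖y‖ ^ 2 + δ ^ 2 * z ^ 2) / (2 * x) := by
  obtain ⟨a, b, c⟩ := q
  have ha : a ≤ -(1 / 2 * (‖b‖ ^ 2 + c ^ 2 / δ ^ 2)) := by
    have : a + 1 / 2 * (‖b‖ ^ 2 + c ^ 2 / δ ^ 2) ≤ 0 := hq
    linarith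
  have hax : a * x ≤ -(x / 2 * ‖b‖ ^ 2) - x / δ ^ 2 / 2 * c ^ 2 :=
    calc a * x ≤ -(1 / 2 * (‖b‖ ^ 2 + c ^ 2 / δ ^ 2)) * x := mul_le_mul_of_nonneg_right ha hx.le
      _ = -(x / 2 * ‖b‖ ^ 2) - x / δ ^ 2 / 2 * c ^ 2 := by ring
  have hb := real_inner_le_young_weighted hx b y
  have hc := mul_le_young_weighted (show 0 < x / δ ^ 2 by positivity) c z
  have hsplit : (‖y‖ ^ 2 + δ ^ 2 * z ^ 2) / (2 * x)
      = ‖y‖ ^ 2 / (2 * x) + z ^ 2 / (2 * (x / δ ^ 2)) := by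
    field_simp
  simp only
  linarith

lemma exists_mem_Bdelta_pairing_eq (hx : 0 < x) :
    ∃ q ∈ Bdelta δ d,
      q.1 * x + inner ℝ q.2.1 y + q.2.2 * z = (‖y‖ ^ 2 + δ ^ 2 * z ^ 2) / (2 * x) := by
  set b := x⁻¹ • y
  set c := δ ^ 2 * z / x
  refine ⟨(-(1 / 2) * (‖b‖ ^ 2 + c ^ 2 / δ ^ 2), b, c), mk_mem_Bdelta (by ring_nf; rfl), ?_⟩
  have hb : ‖b‖ ^ 2 = ‖y‖ ^ 2 / x ^ 2 := by
    rw [norm_smul, norm_inv, Real.norm_of_nonneg hx.le]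
    field_simp
  have hby : inner ℝ b y = ‖y‖ ^ 2 / x := by
    rw [real_inner_smul_left, real_inner_self_eq_norm_sq]
    field_simp
  simp only [hb, hby, c]
  field_simp
  ring

lemma isGreatest_pairing_Bdelta (hδ : δ ≠ 0) (hx : 0 < x) :
    IsGreatest ((fun q ↦ q.1 * x + inner ℝ q.2.1 y + q.2.2 * z) '' Bdelta δ d)
      ((‖y‖ ^ 2 + δ ^ 2 * z ^ 2) / (2 * x)) := by
  obtain ⟨q, hq, hval⟩ := exists_mem_Bdelta_pairing_eq (y := y) (z := z) hx
  exact ⟨⟨q, hq, hval⟩, by rintro _ ⟨p, hp, rfl⟩; exact pairing_le_of_mem_Bdelta hδ hx hp⟩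

lemma exists_mem_Bdelta_pairing_ge (hx : x ≤ 0) {t : ℝ} (ht : 0 ≤ t) :
    ∃ q ∈ Bdelta δ d,
      t * (‖y‖ ^ 2 + δ ^ 2 * z ^ 2 - x) ≤ q.1 * x + inner ℝ q.2.1 y + q.2.2 * z := by
  set s := ‖y‖ ^ 2 + δ ^ 2 * z ^ 2
  have hs : 0 ≤ s := by positivity
  refine ⟨(-t - t ^ 2 * s / 2, t • y, t * δ ^ 2 * z), mk_mem_Bdelta ?_, ?_⟩
  · rw [norm_smul, Real.norm_of_nonneg ht]
    field_simp
    nlinarith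
  · simp only
    rw [real_inner_smul_left, real_inner_self_eq_norm_sq]
    nlinarith [mul_nonneg (mul_nonneg (sq_nonneg t) hs) (neg_nonneg.mpr hx)]

lemma not_bddAbove_pairing_Bdelta (hδ : δ ≠ 0) (hx : x ≤ 0) (hp : (x, y, z) ≠ 0) :
    ¬BddAbove ((fun q ↦ q.1 * x + inner ℝ q.2.1 y + q.2.2 * z) '' Bdelta δ d) := by
  set s := ‖y‖ ^ 2 + δ ^ 2 * z ^ 2
  have hpos : 0 < s - x := by
    by_contra! hle
    have hy : ‖y‖ ^ 2 = 0 := by nlinarith [sq_nonneg ‖y‖, sq_nonneg (δ * z)]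
    have hz : (δ * z) ^ 2 = 0 := by nlinarith [sq_nonneg ‖y‖, sq_nonneg (δ * z)]
    have hx0 : x = 0 := by nlinarith [sq_nonneg ‖y‖, sq_nonneg (δ * z)]
    exact hp (by simp_all)
  refine not_bddAbove_iff.mpr fun r ↦ ?_
  obtain ⟨q, hq, hge⟩ := exists_mem_Bdelta_pairing_ge (y := y) (z := z) hx
    (t := |r| / (s - x) + 1) (by positivity)
  refine ⟨_, ⟨q, hq, rfl⟩, lt_of_lt_of_le ?_ hge⟩
  rw [add_mul, div_mul_cancel₀ _ hpos.ne']
  linarith [le_abs_self r]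

end

/-- `f_δ` is the Fenchel–Legendre conjugate of the indicator of `B_δ`: the supremum over
`(a,b,c) ∈ B_δ` of `a·x + ⟨b,y⟩ + c·z` (taken in the extended reals) equals `f_δ(x,y,z)`. -/
theorem fdelta_conjugate (δ : ℝ) (hδ : 0 < δ) (d : ℕ)
    (x : ℝ) (y : EuclideanSpace ℝ (Fin d)) (z : ℝ) :
    (⨆ q ∈ Bdelta δ d, ENNReal.ofReal (q.1 * x + (inner ℝ q.2.1 y : ℝ) + q.2.2 * z)) =
      fdelta δ d (x, y, z) := by
  rcases lt_or_ge 0 x with hx | hx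
  · rw [fdelta_of_pos hx,
      ENNReal.iSup₂_ofReal_of_isGreatest (isGreatest_pairing_Bdelta hδ.ne' hx)]
  by_cases hp : (x, y, z) = 0
  · simp only [Prod.ext_iff] at hp
    obtain ⟨rfl, rfl, rfl⟩ := hp
    simp [fdelta]
  · rw [fdelta_of_nonpos_of_ne_zero hx hp,
      ENNReal.iSup₂_ofReal_eq_top_of_not_bddAbove (not_bddAbove_pairing_Bdelta hδ.ne' hx hp)]
end

section
/- Let m : [0,1] → ℝ≥0 be absolutely continuous with m(0) = m₀ and satisfy |m'(t)| ≤ √(2D·m(t)) for a.e. t, for some constant D ≥ 0. Then ∫₀¹ m(t) dt ≤ m₀ + √(2D) · √(∫₀¹ m(t) dt), and consequently ∫₀¹ m(t) dt ≤ (√(m₀ + D/2) + √(D/2))² (a bound depending only on m₀ and D). -/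
open MeasureTheory Set

/-!
Every value of `m` is at most `m₀ + ∫₀¹ |m'|`, so `∫₀¹ m ≤ m₀ + ∫₀¹ √(2D m)`, and Jensen's
inequality for the concave square root bounds the last integral by `√(2D ∫₀¹ m)`. The resulting
inequality `x² ≤ m₀ + √(2D) x` for `x = √(∫₀¹ m)` is then solved as a quadratic inequality.
-/

theorem le_add_sqrt_of_sq_le_add_mul {x p b : ℝ} (h : x ^ 2 ≤ p + 2 * b * x) :
    x ≤ b + √(p + b ^ 2) := by
  have : |x - b| ≤ √(p + b ^ 2) := Real.abs_le_sqrt (by nlinarith)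
  linarith [le_abs_self (x - b)]

theorem le_sq_of_le_add_sqrt_mul_sqrt {x p D : ℝ} (hx : 0 ≤ x) (hD : 0 ≤ D)
    (h : x ≤ p + √(2 * D) * √x) : x ≤ (√(p + D / 2) + √(D / 2)) ^ 2 := by
  have hsqrt2D : √(2 * D) = 2 * √(D / 2) := by
    rw [show 2 * D = 2 ^ 2 * (D / 2) by ring, Real.sqrt_mul (by positivity),
      Real.sqrt_sq zero_le_two]
  have hroot : √x ≤ √(D / 2) + √(p + √(D / 2) ^ 2) := by
    refine le_add_sqrt_of_sq_le_add_mul ?_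
    rwa [Real.sq_sqrt hx, ← hsqrt2D]
  rw [Real.sq_sqrt (by positivity), add_comm (√(D / 2))] at hroot
  calc x = √x ^ 2 := (Real.sq_sqrt hx).symm
    _ ≤ _ := pow_le_pow_left₀ (Real.sqrt_nonneg _) hroot 2

theorem integral_sqrt_le_sqrt_integral {α : Type*} [MeasurableSpace α] {μ : Measure α}
    [IsProbabilityMeasure μ] {f : α → ℝ} (hf : 0 ≤ᵐ[μ] f) (hfi : Integrable f μ)
    (hsqrt : Integrable (fun x ↦ √(f x)) μ) :
    ∫ x, √(f x) ∂μ ≤ √(∫ x, f x ∂μ) :=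
  Real.strictConcaveOn_sqrt.concaveOn.le_map_integral Real.continuous_sqrt.continuousOn
    isClosed_Ici hf hfi hsqrt

theorem intervalIntegral.integral_sqrt_le_sqrt_integral_zero_one {f : ℝ → ℝ}
    (hf : ∀ x ∈ Icc (0 : ℝ) 1, 0 ≤ f x) (hfi : IntervalIntegrable f volume 0 1)
    (hsqrt : IntervalIntegrable (fun x ↦ √(f x)) volume 0 1) :
    ∫ x in (0 : ℝ)..1, √(f x) ≤ √(∫ x in (0 : ℝ)..1, f x) := by
  have : IsProbabilityMeasure (volume.restrict (Ioc (0 : ℝ) 1)) := ⟨by simp⟩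
  simp only [intervalIntegral.integral_of_le zero_le_one]
  refine integral_sqrt_le_sqrt_integral ?_ hfi.1 hsqrt.1
  filter_upwards [ae_restrict_mem measurableSet_Ioc] with x hx
  exact hf x (Ioc_subset_Icc_self hx)

section Primitive

variable {m m' : ℝ → ℝ} {a b m₀ : ℝ}

theorem continuousOn_of_eq_add_integral (hab : a ≤ b) (hint : IntervalIntegrable m' volume a b)
    (hrep : ∀ t ∈ Icc a b, m t = m₀ + ∫ s in a..t, m' s) : ContinuousOn m (Icc a b) := by
  rw [intervalIntegrable_iff_integrableOn_Icc_of_le hab, ← uIcc_of_le hab] at hint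
  have hF := intervalIntegral.continuousOn_primitive_interval hint
  rw [uIcc_of_le hab] at hF
  exact (continuousOn_const.add hF).congr hrep

theorem le_add_integral_abs_of_eq_add_integral (hint : IntervalIntegrable m' volume a b)
    (hrep : ∀ t ∈ Icc a b, m t = m₀ + ∫ s in a..t, m' s) {t : ℝ} (ht : t ∈ Icc a b) :
    m t ≤ m₀ + ∫ s in a..b, |m' s| := by
  rw [hrep t ht]
  gcongr
  calc (∫ s in a..t, m' s) ≤ ∫ s in a..t, |m' s| :=
        (le_abs_self _).trans (intervalIntegral.abs_integral_le_integral_abs ht.1)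
    _ ≤ ∫ s in a..b, |m' s| :=
        intervalIntegral.integral_mono_interval le_rfl ht.1 ht.2
          (.of_forall fun _ ↦ abs_nonneg _) hint.abs

theorem integral_le_add_integral_abs_of_eq_add_integral (hab : a ≤ b)
    (hint : IntervalIntegrable m' volume a b)
    (hrep : ∀ t ∈ Icc a b, m t = m₀ + ∫ s in a..t, m' s) :
    ∫ t in a..b, m t ≤ (b - a) * (m₀ + ∫ s in a..b, |m' s|) := by
  have hm := continuousOn_of_eq_add_integral hab hint hrep
  calc ∫ t in a..b, m t ≤ ∫ _ in a..b, (m₀ + ∫ s in a..b, |m' s|) :=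
        intervalIntegral.integral_mono_on hab (hm.intervalIntegrable_of_Icc hab)
          intervalIntegrable_const fun t ht ↦ le_add_integral_abs_of_eq_add_integral hint hrep ht
    _ = (b - a) * (m₀ + ∫ s in a..b, |m' s|) := by
        rw [intervalIntegral.integral_const, smul_eq_mul]

end Primitive

theorem mass_bound_general (m m' : ℝ → ℝ) (m₀ D : ℝ) (hD : 0 ≤ D)
    (hnn : ∀ t ∈ Icc (0 : ℝ) 1, 0 ≤ m t)
    (hint : IntegrableOn m' (Icc (0 : ℝ) 1))
    (hrep : ∀ t ∈ Icc (0 : ℝ) 1, m t = m₀ + ∫ s in (0 : ℝ)..t, m' s)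
    (hbound : ∀ᵐ s ∂(volume.restrict (Icc (0 : ℝ) 1)),
      |m' s| ≤ Real.sqrt (2 * D * m s)) :
    (∫ t in (0 : ℝ)..1, m t) ≤
        m₀ + Real.sqrt (2 * D) * Real.sqrt (∫ t in (0 : ℝ)..1, m t) ∧
      (∫ t in (0 : ℝ)..1, m t) ≤
        (Real.sqrt (m₀ + D / 2) + Real.sqrt (D / 2)) ^ 2 := by
  have hint' : IntervalIntegrable m' volume 0 1 :=
    (intervalIntegrable_iff_integrableOn_Icc_of_le zero_le_one).2 hint
  have hm := continuousOn_of_eq_add_integral zero_le_one hint' hrep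
  have hmass : IntervalIntegrable (fun s ↦ 2 * D * m s) volume 0 1 :=
    (hm.intervalIntegrable_of_Icc zero_le_one).const_mul _
  have hsqrt : IntervalIntegrable (fun s ↦ √(2 * D * m s)) volume 0 1 :=
    ((continuousOn_const.mul hm).sqrt).intervalIntegrable_of_Icc zero_le_one
  set I := ∫ t in (0 : ℝ)..1, m t
  have hI : 0 ≤ I := intervalIntegral.integral_nonneg zero_le_one hnn
  have key : I ≤ m₀ + √(2 * D) * √I := calc
    I ≤ m₀ + ∫ s in (0 : ℝ)..1, |m' s| := by
      simpa using integral_le_add_integral_abs_of_eq_add_integral zero_le_one hint' hrep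
    _ ≤ m₀ + ∫ s in (0 : ℝ)..1, √(2 * D * m s) := by
      gcongr
      exact intervalIntegral.integral_mono_ae_restrict zero_le_one hint'.abs hsqrt hbound
    _ ≤ m₀ + √(∫ s in (0 : ℝ)..1, 2 * D * m s) := by
      gcongr
      exact intervalIntegral.integral_sqrt_le_sqrt_integral_zero_one
        (fun s hs ↦ by have := hnn s hs; positivity) hmass hsqrt
    _ = m₀ + √(2 * D) * √I := by
      rw [intervalIntegral.integral_const_mul, Real.sqrt_mul (by positivity)]
  exact ⟨key, le_sq_of_le_add_sqrt_mul_sqrt hI hD key⟩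

/-- Mass estimate: if `m ≥ 0` is absolutely continuous on `[0,1]` (represented by an integral
representation with integrable a.e.-derivative `m'`), `m(0) = m₀` and `|m'(t)| ≤ √(2D·m(t))`
a.e., then `∫₀¹ m ≤ m₀ + √(2D)·√(∫₀¹ m)` and hence `∫₀¹ m ≤ (√(m₀+D/2) + √(D/2))²`. -/
theorem mass_bound (m m' : ℝ → ℝ) (m₀ D : ℝ) (hD : 0 ≤ D)
    (hm0 : m 0 = m₀)
    (hnn : ∀ t ∈ Icc (0 : ℝ) 1, 0 ≤ m t)
    (hint : IntegrableOn m' (Icc (0 : ℝ) 1))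
    (hrep : ∀ t ∈ Icc (0 : ℝ) 1, m t = m₀ + ∫ s in (0 : ℝ)..t, m' s)
    (hbound : ∀ᵐ s ∂(volume.restrict (Icc (0 : ℝ) 1)),
      |m' s| ≤ Real.sqrt (2 * D * m s)) :
    (∫ t in (0 : ℝ)..1, m t) ≤
        m₀ + Real.sqrt (2 * D) * Real.sqrt (∫ t in (0 : ℝ)..1, m t) ∧
      (∫ t in (0 : ℝ)..1, m t) ≤
        (Real.sqrt (m₀ + D / 2) + Real.sqrt (D / 2)) ^ 2 :=
  mass_bound_general m m' m₀ D hD hnn hint hrep hbound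
end

section
/- Let δ = 1, h₀, h₁ > 0, and |x₁ - x₀| < π. With τ = tan((x₁-x₀)/2), A = h₀ + h₁ - 2√(h₀h₁/(1+τ²)), B = h₀ - √(h₀h₁/(1+τ²)), and ω₀ = 2τ√(h₀h₁/(1+τ²)), the function h(t) = At² - 2Bt + h₀ is strictly positive on [0,1], satisfies h(1) = h₁, and satisfies the ODE 2h''(t)h(t) - h'(t)² = ω₀². -/
/-!
In Bernstein form the profile reads `h t = h₀ (1-t)² + h₁ t² + 2 s t (1-t)` with
`s = √(h₀h₁/(1+τ²)) ≥ 0`, so it is positive on `[0,1]` and equals `h₁` at `t = 1`.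
For any quadratic `a t² - 2 b t + c` the quantity `2 h'' h - h'²` is the constant
`4 (a c - b²)`, which here is `4 (h₀h₁ - s²) = 4 τ² s² = ω₀²`.
-/

open Real

section Quadratic

variable (a b c : ℝ)

theorem hasDerivAt_quadratic (t : ℝ) :
    HasDerivAt (fun t => a * t ^ 2 - 2 * b * t + c) (2 * a * t - 2 * b) t := by
  refine ((((hasDerivAt_pow 2 t).const_mul a).sub
    ((hasDerivAt_id' t).const_mul (2 * b))).add_const c).congr_deriv ?_
  norm_num
  ring

theorem hasDerivAt_affine (t : ℝ) : HasDerivAt (fun t => a * t - b) a t := by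
  simpa using ((hasDerivAt_id t).const_mul a).sub_const b

theorem two_mul_second_deriv_mul_sub_deriv_sq_quadratic (t : ℝ) :
    2 * (2 * a) * (a * t ^ 2 - 2 * b * t + c) - (2 * a * t - 2 * b) ^ 2 = 4 * (a * c - b ^ 2) := by
  ring

end Quadratic

theorem bernstein_quadratic_pos {h₀ h₁ s t : ℝ} (hh₀ : 0 < h₀) (hh₁ : 0 < h₁) (hs : 0 ≤ s)
    (ht : t ∈ Set.Icc (0 : ℝ) 1) :
    0 < h₀ * (1 - t) ^ 2 + h₁ * t ^ 2 + 2 * s * (t * (1 - t)) := by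
  obtain ⟨ht0, ht1⟩ := ht
  rcases ht0.eq_or_lt with rfl | ht0
  · simpa using hh₀
  have hmid : 0 ≤ 2 * s * (t * (1 - t)) := by
    have : 0 ≤ 1 - t := by linarith
    positivity
  have hend : 0 < h₁ * t ^ 2 := by positivity
  have hstart : 0 ≤ h₀ * (1 - t) ^ 2 := by positivity
  linarith

theorem mul_sqrt_div_one_add_sq_sq {p : ℝ} (hp : 0 ≤ p) (τ : ℝ) :
    (τ * √(p / (1 + τ ^ 2))) ^ 2 = p - √(p / (1 + τ ^ 2)) ^ 2 := by
  rw [mul_pow, sq_sqrt (by positivity)]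
  field_simp
  ring

theorem travelling_dirac_mass_general (h₀ h₁ x₀ x₁ : ℝ) (hh₀ : 0 < h₀) (hh₁ : 0 < h₁) :
    let τ := Real.tan ((x₁ - x₀) / 2)
    let A := h₀ + h₁ - 2 * Real.sqrt (h₀ * h₁ / (1 + τ ^ 2))
    let B := h₀ - Real.sqrt (h₀ * h₁ / (1 + τ ^ 2))
    let ω₀ := 2 * τ * Real.sqrt (h₀ * h₁ / (1 + τ ^ 2))
    let h := fun t : ℝ => A * t ^ 2 - 2 * B * t + h₀
    (∀ t ∈ Set.Icc (0 : ℝ) 1, 0 < h t) ∧ h 1 = h₁ ∧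
      (∀ t : ℝ, HasDerivAt h (2 * A * t - 2 * B) t ∧
        HasDerivAt (fun s : ℝ => 2 * A * s - 2 * B) (2 * A) t ∧
        2 * (2 * A) * h t - (2 * A * t - 2 * B) ^ 2 = ω₀ ^ 2) := by
  intro τ A B ω₀ h
  set s := √(h₀ * h₁ / (1 + τ ^ 2))
  have hbernstein : ∀ t, h t = h₀ * (1 - t) ^ 2 + h₁ * t ^ 2 + 2 * s * (t * (1 - t)) := by
    intro t
    simp only [h, A, B]
    ring
  refine ⟨fun t ht => hbernstein t ▸ bernstein_quadratic_pos hh₀ hh₁ (sqrt_nonneg _) ht,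
    by simp [hbernstein], fun t => ⟨hasDerivAt_quadratic A B h₀ t, hasDerivAt_affine _ _ t, ?_⟩⟩
  calc 2 * (2 * A) * h t - (2 * A * t - 2 * B) ^ 2 = 4 * (A * h₀ - B ^ 2) :=
        two_mul_second_deriv_mul_sub_deriv_sq_quadratic A B h₀ t
    _ = 4 * (h₀ * h₁ - s ^ 2) := by ring
    _ = ω₀ ^ 2 := by
        rw [← mul_sqrt_div_one_add_sq_sq (by positivity) τ]
        ring

/-- Travelling-Dirac mass profile (δ = 1): with `τ = tan((x₁-x₀)/2)`,
`A = h₀+h₁-2√(h₀h₁/(1+τ²))`, `B = h₀-√(h₀h₁/(1+τ²))`, `ω₀ = 2τ√(h₀h₁/(1+τ²))`,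
the function `h(t) = At² - 2Bt + h₀` is positive on `[0,1]`, satisfies `h(1) = h₁`,
and solves `2h''h - (h')² = ω₀²` (with `h'(t) = 2At - 2B` and `h'' = 2A`). -/
theorem travelling_dirac_mass (h₀ h₁ x₀ x₁ : ℝ) (hh₀ : 0 < h₀) (hh₁ : 0 < h₁)
    (hx : |x₁ - x₀| < Real.pi) :
    let τ := Real.tan ((x₁ - x₀) / 2)
    let A := h₀ + h₁ - 2 * Real.sqrt (h₀ * h₁ / (1 + τ ^ 2))
    let B := h₀ - Real.sqrt (h₀ * h₁ / (1 + τ ^ 2))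
    let ω₀ := 2 * τ * Real.sqrt (h₀ * h₁ / (1 + τ ^ 2))
    let h := fun t : ℝ => A * t ^ 2 - 2 * B * t + h₀
    (∀ t ∈ Set.Icc (0 : ℝ) 1, 0 < h t) ∧ h 1 = h₁ ∧
      (∀ t : ℝ, HasDerivAt h (2 * A * t - 2 * B) t ∧
        HasDerivAt (fun s : ℝ => 2 * A * s - 2 * B) (2 * A) t ∧
        2 * (2 * A) * h t - (2 * A * t - 2 * B) ^ 2 = ω₀ ^ 2) :=
  travelling_dirac_mass_general h₀ h₁ x₀ x₁ hh₀ hh₁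
end

section
/- Let δ = 1, h₀, h₁ > 0, 0 < x₁ - x₀ < π, and define A, B, ω₀, h as in the travelling-Dirac ansatz (h(t)=At²-2Bt+h₀, ω₀ = 2τ√(h₀h₁/(1+τ²)), τ = tan((x₁-x₀)/2)). Then ∫₀¹ ω₀/h(t) dt = x₁ - x₀, i.e. the trajectory x(t) solving h(t)x'(t) = ω₀ with x(0) = x₀ satisfies x(1) = x₁. -/
/-!
Completing the square, `4A·h(t) = ω₀² + 4(At - B)²` because `ω₀² = 4(Ah₀ - B²)`, so `ω₀ / h` has
the antiderivative `2 arctan (2(At - B)/ω₀)` and the integral is `2 (arctan a + arctan b)` with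
`a = 2(A - B)/ω₀`, `b = 2B/ω₀`. Writing `s = √(h₀h₁/(1 + τ²))`, the relation `s²(1 + τ²) = h₀h₁`
makes the arctan addition formula collapse to `arctan a + arctan b = arctan τ = (x₁ - x₀)/2`;
the formula applies because `1 - ab > 0` amounts to `2s < h₀ + h₁`, which follows from AM–GM.
-/

open Real

theorem two_mul_lt_add_of_sq_mul_one_add_sq_eq {p q s τ : ℝ} (hp : 0 < p) (hq : 0 < q)
    (hτ : 0 < τ) (h : s ^ 2 * (1 + τ ^ 2) = p * q) : 2 * s < p + q := by
  by_contra! hle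
  have hs : 0 < s := by linarith
  nlinarith [sq_nonneg (p - q), mul_pos (pow_pos hs 2) (pow_pos hτ 2),
    mul_self_le_mul_self (by positivity : (0 : ℝ) ≤ p + q) hle]

section Quadratic

variable {A B C ω : ℝ}

theorem four_mul_quadratic_eq (hdisc : ω ^ 2 = 4 * (A * C - B ^ 2)) (t : ℝ) :
    4 * A * (A * t ^ 2 - 2 * B * t + C) = ω ^ 2 + 4 * (A * t - B) ^ 2 := by
  rw [hdisc]; ring

theorem quadratic_ne_zero (hω : ω ≠ 0) (hdisc : ω ^ 2 = 4 * (A * C - B ^ 2)) (t : ℝ) :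
    A * t ^ 2 - 2 * B * t + C ≠ 0 := by
  intro h
  have := four_mul_quadratic_eq hdisc t
  rw [h, mul_zero] at this
  linarith [sq_pos_of_ne_zero hω, sq_nonneg (A * t - B)]

theorem hasDerivAt_two_mul_arctan_quadratic (hω : ω ≠ 0) (hdisc : ω ^ 2 = 4 * (A * C - B ^ 2))
    (t : ℝ) :
    HasDerivAt (fun t => 2 * arctan (2 * (A * t - B) / ω))
      (ω / (A * t ^ 2 - 2 * B * t + C)) t := by
  have hinner : HasDerivAt (fun t => 2 * (A * t - B) / ω) (2 * A / ω) t := by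
    simpa using ((((hasDerivAt_id t).const_mul A).sub_const B).const_mul 2).div_const ω
  refine ((hasDerivAt_arctan _).comp t hinner).const_mul 2 |>.congr_deriv ?_
  have hq := quadratic_ne_zero hω hdisc t
  have hA : A ≠ 0 := by
    rintro rfl
    nlinarith [sq_pos_of_ne_zero hω, sq_nonneg B]
  have hsq : 1 + (2 * (A * t - B) / ω) ^ 2 = 4 * A * (A * t ^ 2 - 2 * B * t + C) / ω ^ 2 := by
    rw [four_mul_quadratic_eq hdisc t]; field_simp; ring
  rw [hsq]
  field_simp
  ring

theorem integral_div_quadratic (hω : ω ≠ 0) (hdisc : ω ^ 2 = 4 * (A * C - B ^ 2))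
    (a b : ℝ) :
    ∫ t in a..b, ω / (A * t ^ 2 - 2 * B * t + C) =
      2 * arctan (2 * (A * b - B) / ω) - 2 * arctan (2 * (A * a - B) / ω) := by
  refine intervalIntegral.integral_eq_sub_of_hasDerivAt
    (fun t _ => hasDerivAt_two_mul_arctan_quadratic hω hdisc t) ?_
  refine (Continuous.continuousOn ?_).intervalIntegrable
  exact continuous_const.div (by fun_prop) (quadratic_ne_zero hω hdisc)

end Quadratic

theorem arctan_add_arctan_of_sq_mul_one_add_sq_eq {p q s τ : ℝ} (hp : 0 < p) (hq : 0 < q)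
    (hs : 0 < s) (hτ : 0 < τ) (h : s ^ 2 * (1 + τ ^ 2) = p * q) :
    arctan ((p - s) / (τ * s)) + arctan ((q - s) / (τ * s)) = arctan τ := by
  have hsum := two_mul_lt_add_of_sq_mul_one_add_sq_eq hp hq hτ h
  have hone : 1 - (p - s) / (τ * s) * ((q - s) / (τ * s)) = (p + q - 2 * s) / (τ ^ 2 * s) := by
    field_simp
    linear_combination h
  have hpos : 0 < (p + q - 2 * s) / (τ ^ 2 * s) := div_pos (by linarith) (by positivity)
  rw [arctan_add (by linarith)]
  congr 1
  rw [div_eq_iff (hone ▸ hpos.ne'), hone]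
  field_simp
  ring

/-- Travelling-Dirac trajectory reaches its target: with the ansatz constants
(`δ = 1`, `0 < x₁ - x₀ < π`), the trajectory solving `h(t)x'(t) = ω₀`, `x(0) = x₀`
satisfies `x(1) = x₁`, i.e. `∫₀¹ ω₀/h(t) dt = x₁ - x₀`. -/
theorem travelling_dirac_arrival (h₀ h₁ x₀ x₁ : ℝ) (hh₀ : 0 < h₀) (hh₁ : 0 < h₁)
    (hx : 0 < x₁ - x₀) (hx' : x₁ - x₀ < Real.pi) :
    let τ := Real.tan ((x₁ - x₀) / 2)
    let A := h₀ + h₁ - 2 * Real.sqrt (h₀ * h₁ / (1 + τ ^ 2))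
    let B := h₀ - Real.sqrt (h₀ * h₁ / (1 + τ ^ 2))
    let ω₀ := 2 * τ * Real.sqrt (h₀ * h₁ / (1 + τ ^ 2))
    let h := fun t : ℝ => A * t ^ 2 - 2 * B * t + h₀
    (∫ t in (0 : ℝ)..1, ω₀ / h t) = x₁ - x₀ := by
  intro τ A B ω₀ h
  have hτ : 0 < τ := tan_pos_of_pos_of_lt_pi_div_two (by linarith) (by linarith)
  set s := √(h₀ * h₁ / (1 + τ ^ 2))
  have hs : 0 < s := sqrt_pos.2 (by positivity)
  have hs2 : s ^ 2 * (1 + τ ^ 2) = h₀ * h₁ := by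
    rw [sq_sqrt (by positivity)]; field_simp
  have hω : ω₀ ≠ 0 := by positivity
  have hdisc : ω₀ ^ 2 = 4 * (A * h₀ - B ^ 2) := by linear_combination 4 * hs2
  have harctan := arctan_add_arctan_of_sq_mul_one_add_sq_eq hh₁ hh₀ hs hτ (by linarith)
  have h1 : 2 * (A * 1 - B) / ω₀ = (h₁ - s) / (τ * s) := by field_simp; ring
  have h0 : 2 * (A * 0 - B) / ω₀ = -((h₀ - s) / (τ * s)) := by field_simp; ring
  have hθ : arctan τ = (x₁ - x₀) / 2 := arctan_tan (by linarith) (by linarith)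
  rw [integral_div_quadratic hω hdisc, h1, h0, arctan_neg]
  linarith
end

section
/- Let x : [0,1] → ℝ solve x'(t) = -a(t) sin(x(t)-θ) with a(t) = 1/(t-t₁) - 1/(t-t₂), t₁ > 1, t₂ < 0, and suppose sin(x(t)-θ) ≠ 0 for all t ∈ [0,1]. Then there is a constant κ > 0 such that for all t ∈ [0,1], cos(x(t)-θ) = (κ²(t-t₁)² - (t-t₂)²)/(κ²(t-t₁)² + (t-t₂)²). -/
/-!
With `u = x - θ` and `a(t) = 1/(t-t₁) - 1/(t-t₂)`, the ODE `u' = -a sin u` gives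
`(log tan²(u/2))' = 2u'/sin u = -2a`, while `(log ((t-t₁)/(t-t₂))²)' = 2a`. Hence
`tan²(u/2) · ((t-t₁)/(t-t₂))² = (1 - cos u)/(1 + cos u) · ((t-t₁)/(t-t₂))²` is a positive
constant `κ⁻²` on `[0,1]`, and solving for `cos u` gives the formula.
-/

open Real Set

theorem HasDerivAt.mul_zero_of_opposite_logDeriv {f g : ℝ → ℝ} {b t : ℝ}
    (hf : HasDerivAt f (-b * f t) t) (hg : HasDerivAt g (b * g t) t) :
    HasDerivAt (fun s => f s * g s) 0 t :=
  (hf.fun_mul hg).congr_deriv (by ring)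

theorem neg_one_lt_cos_and_cos_lt_one_of_sin_ne_zero {u : ℝ} (h : sin u ≠ 0) :
    -1 < cos u ∧ cos u < 1 := by
  refine abs_lt.mp ((sq_lt_one_iff_abs_lt_one _).mp ?_)
  nlinarith [sin_sq_add_cos_sq u, sq_pos_of_ne_zero h]

theorem hasDerivAt_one_sub_cos_div_one_add_cos {u : ℝ → ℝ} {a t : ℝ}
    (hu : HasDerivAt u (-a * sin (u t)) t) (hc : 1 + cos (u t) ≠ 0) :
    HasDerivAt (fun s => (1 - cos (u s)) / (1 + cos (u s)))
      (-(2 * a) * ((1 - cos (u t)) / (1 + cos (u t)))) t := by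
  refine ((hu.cos.const_sub 1).fun_div (hu.cos.const_add 1) hc).congr_deriv ?_
  have hsin : sin (u t) ^ 2 = (1 - cos (u t)) * (1 + cos (u t)) := by
    rw [sin_sq]; ring
  field_simp
  linear_combination (-2 * a) * hsin

theorem hasDerivAt_sub_div_sub_sq {t₁ t₂ t : ℝ} (h₁ : t - t₁ ≠ 0) (h₂ : t - t₂ ≠ 0) :
    HasDerivAt (fun s => ((s - t₁) / (s - t₂)) ^ 2)
      (2 * (1 / (t - t₁) - 1 / (t - t₂)) * ((t - t₁) / (t - t₂)) ^ 2) t := by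
  refine ((((hasDerivAt_id' t).sub_const t₁).fun_div
    ((hasDerivAt_id' t).sub_const t₂) h₂).fun_pow 2).congr_deriv ?_
  simp only [Nat.cast_ofNat, Nat.add_one_sub_one, pow_one]
  field_simp

theorem eq_div_of_one_sub_div_one_add_mul_eq {c p q κ : ℝ} (hc : 1 + c ≠ 0) (hq : q ≠ 0)
    (h : (1 - c) / (1 + c) * (p / q) ^ 2 * κ ^ 2 = 1) :
    c = (κ ^ 2 * p ^ 2 - q ^ 2) / (κ ^ 2 * p ^ 2 + q ^ 2) := by
  have hden : 0 < κ ^ 2 * p ^ 2 + q ^ 2 := by positivity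
  rw [eq_div_iff hden.ne']
  field_simp at h
  linear_combination -h

/-- Integration of the characteristic ODE `x'(t) = -a(t)·sin(x(t)-θ)` with
`a(t) = 1/(t-t₁) - 1/(t-t₂)`, `t₁ > 1`, `t₂ < 0`: if `sin(x(t)-θ)` never vanishes on `[0,1]`,
then there is `κ > 0` with `cos(x(t)-θ) = (κ²(t-t₁)² - (t-t₂)²)/(κ²(t-t₁)² + (t-t₂)²)`. -/
theorem characteristic_ode_integration (t₁ t₂ θ : ℝ) (ht₁ : 1 < t₁) (ht₂ : t₂ < 0)
    (x : ℝ → ℝ)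
    (hode : ∀ t ∈ Set.Icc (0 : ℝ) 1,
      HasDerivAt x (-(1 / (t - t₁) - 1 / (t - t₂)) * Real.sin (x t - θ)) t)
    (hsin : ∀ t ∈ Set.Icc (0 : ℝ) 1, Real.sin (x t - θ) ≠ 0) :
    ∃ κ : ℝ, 0 < κ ∧ ∀ t ∈ Set.Icc (0 : ℝ) 1,
      Real.cos (x t - θ) =
        (κ ^ 2 * (t - t₁) ^ 2 - (t - t₂) ^ 2) / (κ ^ 2 * (t - t₁) ^ 2 + (t - t₂) ^ 2) := by
  set φ : ℝ → ℝ := fun t =>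
    (1 - cos (x t - θ)) / (1 + cos (x t - θ)) * ((t - t₁) / (t - t₂)) ^ 2
  have hcos t (ht : t ∈ Icc (0 : ℝ) 1) := neg_one_lt_cos_and_cos_lt_one_of_sin_ne_zero (hsin t ht)
  have hsub₁ t (ht : t ∈ Icc (0 : ℝ) 1) : t - t₁ ≠ 0 := by linarith [ht.2]
  have hsub₂ t (ht : t ∈ Icc (0 : ℝ) 1) : t - t₂ ≠ 0 := by linarith [ht.1]
  have hφ' t (ht : t ∈ Icc (0 : ℝ) 1) : HasDerivAt φ 0 t :=
    HasDerivAt.mul_zero_of_opposite_logDeriv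
      (hasDerivAt_one_sub_cos_div_one_add_cos ((hode t ht).sub_const θ)
        (by linarith [(hcos t ht).1]))
      (hasDerivAt_sub_div_sub_sq (hsub₁ t ht) (hsub₂ t ht))
  have hφ_const : ∀ t ∈ Icc (0 : ℝ) 1, φ t = φ 0 :=
    constant_of_has_deriv_right_zero (fun t ht => (hφ' t ht).continuousAt.continuousWithinAt)
      fun t ht => (hφ' t (Ico_subset_Icc_self ht)).hasDerivWithinAt
  have h0 : (0 : ℝ) ∈ Icc (0 : ℝ) 1 := left_mem_Icc.mpr zero_le_one
  have hφ0 : 0 < φ 0 :=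
    mul_pos (div_pos (by linarith [(hcos 0 h0).2]) (by linarith [(hcos 0 h0).1]))
      (sq_pos_of_ne_zero (div_ne_zero (hsub₁ 0 h0) (hsub₂ 0 h0)))
  refine ⟨(√(φ 0))⁻¹, by positivity, fun t ht => ?_⟩
  refine eq_div_of_one_sub_div_one_add_mul_eq (by linarith [(hcos t ht).1]) (hsub₂ t ht) ?_
  change φ t * _ = 1
  rw [hφ_const t ht, inv_pow, sq_sqrt hφ0.le, mul_inv_cancel₀ hφ0.ne']
end
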